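/- Let G be a finite group and g : ℕ → G a polynomial sequence (a polynomial map from the additive monoid ℕ of nonnegative integers to G). Then g is periodic: there exists a positive integer P such that g(i + P) = g(i) for all i ∈ ℕ. -/

import Mathlib

namespace PaperPoly

/-- `DegLE d f` means that `f : S → G` is a polynomial map of degree at most `d ∈ ℕ`:
the base case `DegLE 0 f` means `f` is constant, and `DegLE (d+1) f` means that for every
`s : S` both difference maps `L_s f : t ↦ f (s+t) * (f t)⁻¹` and
`R_s f : t ↦ (f t)⁻¹ * f (s+t)` satisfy `DegLE d`. -/
def DegLE {S : Type*} [AddCommSemigroup S] {G : Type*} [Group G] : ℕ → (S → G) → Prop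
  | 0 => fun f => ∀ t t' : S, f t = f t'
  | d + 1 => fun f => ∀ s : S,
      DegLE d (fun t => f (s + t) * (f t)⁻¹) ∧ DegLE d (fun t => (f t)⁻¹ * f (s + t))

/-- `f` is a polynomial map (of some finite degree). -/
def IsPoly {S : Type*} [AddCommSemigroup S] {G : Type*} [Group G] (f : S → G) : Prop :=
  ∃ d : ℕ, DegLE d f

/-! Induct on the degree. If `g` has degree `≤ d + 1`, its difference sequence
`h t = g (t + 1) * (g t)⁻¹` has degree `≤ d`, hence is periodic with some period `P > 0`.
Then `g (t + 1) = h t * g t` says that `t ↦ (t mod P, g t)` is an orbit of the permutation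
`(r, x) ↦ (r + 1, h r * x)` of the finite set `ZMod P × G`, so it is periodic. -/

theorem periodic_orderOf_of_succ_eq_perm {α : Type*} [Finite α] (σ : Equiv.Perm α)
    {x : ℕ → α} (hx : ∀ t, x (t + 1) = σ (x t)) :
    Function.Periodic x (orderOf σ) := by
  have orbit : ∀ t, x t = (σ ^ t) (x 0) := by
    intro t
    induction t with
    | zero => rfl
    | succ t ih => rw [hx, ih, pow_succ', Equiv.Perm.mul_apply]
  intro t
  rw [orbit, orbit t, pow_add, pow_orderOf_eq_one, mul_one]

theorem exists_periodic_of_succ_eq_mul {G : Type*} [Group G] [Finite G] {g h : ℕ → G} {P : ℕ}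
    (hP : 0 < P) (hh : Function.Periodic h P) (hg : ∀ t, g (t + 1) = h t * g t) :
    ∃ Q, 0 < Q ∧ Function.Periodic g Q := by
  have : NeZero P := ⟨hP.ne'⟩
  let σ : Equiv.Perm (ZMod P × G) :=
    (Equiv.addRight 1).prodShear fun r => Equiv.mulLeft (h r.val)
  have hper := periodic_orderOf_of_succ_eq_perm σ
    (x := fun t => ((t : ZMod P), g t)) fun t =>
      Prod.ext (Nat.cast_succ t) (by
        simp [σ, Equiv.prodShear, ZMod.val_natCast, hh.map_mod_nat, hg])
  exact ⟨orderOf σ, orderOf_pos σ, fun t => congrArg Prod.snd (hper t)⟩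

theorem DegLE.exists_periodic {G : Type*} [Group G] [Finite G] :
    ∀ {d : ℕ} {g : ℕ → G}, DegLE d g → ∃ P, 0 < P ∧ Function.Periodic g P
  | 0, g, hg => ⟨1, one_pos, fun t => hg (t + 1) t⟩
  | d + 1, g, hg => by
    obtain ⟨P, hP, hh⟩ := DegLE.exists_periodic (hg 1).1
    exact exists_periodic_of_succ_eq_mul hP hh fun t => by
      rw [add_comm 1 t, inv_mul_cancel_right]

theorem polynomial_sequence_in_finite_group_periodic {G : Type*} [Group G] [Finite G]
    (g : ℕ → G) (hg : IsPoly g) :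
    ∃ P : ℕ, 0 < P ∧ ∀ i : ℕ, g (i + P) = g i := by
  obtain ⟨d, hd⟩ := hg
  exact hd.exists_periodic

end PaperPoly
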